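/- For all m, n ∈ ℕ with n ≥ 2, all ℓ ∈ ℕ₀, all c ∈ ℝ, and all z ∈ ℂ, one has D_{m,n,ℓ}(c; (2m−1) − z) = D_{m,n,ℓ}(c; z); in particular, the roots of D_{m,n,ℓ}(c;·) are symmetric about the vertical line Re z = m − 1/2. -/

import Mathlib

noncomputable section

/-- The degree-`2m` polynomial
`D_{m,n,ℓ}(c;z) = (-1)^m ∏_{j=1}^m (z - (n+2ℓ+4j-5)/2)(z + (n+2ℓ-4j+1)/2) + c`. -/
def Dm (m n ℓ : ℕ) (c : ℝ) (z : ℂ) : ℂ :=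
  (-1) ^ m * ∏ j ∈ Finset.Icc 1 m,
      ((z - ((n : ℂ) + 2 * ℓ + 4 * j - 5) / 2) * (z + ((n : ℂ) + 2 * ℓ - 4 * j + 1) / 2))
    + (c : ℂ)

theorem Finset.prod_Icc_one_reflect {M : Type*} [CommMonoid M] (f : ℕ → M) (m : ℕ) :
    ∏ j ∈ Finset.Icc 1 m, f (m + 1 - j) = ∏ j ∈ Finset.Icc 1 m, f j :=
  Finset.prod_nbij' (fun j => m + 1 - j) (fun j => m + 1 - j)
    (fun j hj => by simp only [Finset.mem_Icc] at hj ⊢; omega)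
    (fun j hj => by simp only [Finset.mem_Icc] at hj ⊢; omega)
    (fun j hj => by simp only [Finset.mem_Icc] at hj; omega)
    (fun j hj => by simp only [Finset.mem_Icc] at hj; omega)
    (fun _ _ => rfl)

theorem stmt13_general (m n ℓ : ℕ) (c : ℝ) (z : ℂ) :
    Dm m n ℓ c ((2 * (m : ℂ) - 1) - z) = Dm m n ℓ c z := by
  unfold Dm
  congr 2
  -- `z ↦ 2m - 1 - z` sends the factor of index `j` to that of index `m + 1 - j`, with both
  -- linear terms swapped and negated, so it only permutes the factors.
  rw [← Finset.prod_Icc_one_reflect]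
  refine Finset.prod_congr rfl fun j hj => ?_
  have hjm : j ≤ m + 1 := by grind
  push_cast [Nat.cast_sub hjm]
  ring

/-- `D_{m,n,ℓ}(c;·)` is symmetric about the vertical line `Re z = m - 1/2`. -/
theorem stmt13 (m n ℓ : ℕ) (hm : 1 ≤ m) (hn : 2 ≤ n) (c : ℝ) (z : ℂ) :
    Dm m n ℓ c ((2 * (m : ℂ) - 1) - z) = Dm m n ℓ c z :=
  stmt13_general m n ℓ c z
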